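/- Let C be a modular category that is a Z_q-extension of a pointed fusion category (q prime) and is not pointed. Then every component of the universal grading of C has FP dimension q, every non-invertible simple object of C has FP dimension √q, and C is not integral. -/

import Mathlib

/-!
A Grothendieck-ring (fusion ring) level formalization of fusion categories.
`Fin n` indexes the isomorphism classes of simple objects, `N i j k` is the
multiplicity of the simple `k` in the tensor product `i ⊗ j`, `dim` records the
Frobenius–Perron dimensions of the simple objects.
-/

/-- The Grothendieck-ring data of a fusion category. -/
structure FusionData where
  n : ℕ
  npos : 0 < n
  one : Fin n
  dual : Fin n → Fin n
  N : Fin n → Fin n → Fin n → ℕ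
  dim : Fin n → ℝ
  dim_ge_one : ∀ i, 1 ≤ dim i
  dim_one : dim one = 1
  dim_dual : ∀ i, dim (dual i) = dim i
  dim_mul : ∀ i j, dim i * dim j = ∑ k, (N i j k : ℝ) * dim k
  N_one_left : ∀ i k, N one i k = if k = i then 1 else 0
  N_one_right : ∀ i k, N i one k = if k = i then 1 else 0
  N_dual : ∀ i j, N i j one = if j = dual i then 1 else 0
  dual_dual : ∀ i, dual (dual i) = i
  N_assoc : ∀ i j k l, ∑ m, N i j m * N m k l = ∑ m, N j k m * N i m l

namespace FusionData

/-- The index type of (iso classes of) simple objects. -/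
abbrev I (C : FusionData) : Type := Fin C.n

/-- A simple object is invertible iff its FP dimension is `1`. -/
def Invertible (C : FusionData) (i : C.I) : Prop := C.dim i = 1

/-- A fusion category is pointed if all its simple objects are invertible. -/
def Pointed (C : FusionData) : Prop := ∀ i : C.I, C.dim i = 1

/-- The Frobenius–Perron dimension of the category. -/
noncomputable def FPdim (C : FusionData) : ℝ := ∑ i : C.I, C.dim i ^ 2

open Classical in
/-- The FP dimension of the full subcategory spanned by a set of simples. -/
noncomputable def FPdimSet (C : FusionData) (S : Set C.I) : ℝ :=
  ∑ i : C.I, if i ∈ S then C.dim i ^ 2 else 0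

open Classical in
/-- The number of iso classes of invertible objects, i.e. the order of `G(C)`. -/
noncomputable def numInv (C : FusionData) : ℕ :=
  (Finset.univ.filter fun i : C.I => C.dim i = 1).card

/-- A fusion subcategory: a set of simples containing the unit and closed under
duals and under taking simple constituents of tensor products. -/
structure Sub (C : FusionData) where
  carrier : Set C.I
  one_mem : C.one ∈ carrier
  dual_mem : ∀ i ∈ carrier, C.dual i ∈ carrier
  mul_mem : ∀ i ∈ carrier, ∀ j ∈ carrier, ∀ k, 0 < C.N i j k → k ∈ carrier

/-- The simples of the fusion subcategory generated by a set `S` of simples. -/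
inductive gen (C : FusionData) (S : Set C.I) : C.I → Prop
  | base {i} : i ∈ S → gen C S i
  | one : gen C S C.one
  | dual {i} : gen C S i → gen C S (C.dual i)
  | mul {i j k} : gen C S i → gen C S j → 0 < C.N i j k → gen C S k

/-- Simple constituents of the objects `X ⊗ X⋆`, `X` simple. -/
def adjointGenerators (C : FusionData) : Set C.I := {k | ∃ i, 0 < C.N i (C.dual i) k}

/-- The set of simple objects of the adjoint subcategory `C_ad`. -/
def adSet (C : FusionData) : Set C.I := {k | C.gen C.adjointGenerators k}

/-- The set of simples of `C_pt`, the largest pointed fusion subcategory. -/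
def ptSet (C : FusionData) : Set C.I := {i | C.dim i = 1}

/-- The ring-level shadow of a braiding: the Grothendieck ring of a braided
fusion category is commutative. -/
def Braided (C : FusionData) : Prop := ∀ i j k, C.N i j k = C.N j i k

/-- Integrality: every simple object has integer FP dimension. -/
def Integral (C : FusionData) : Prop := ∀ i : C.I, ∃ m : ℕ, C.dim i = (m : ℝ)

/-- Generalized Tambara–Yamagami: non-pointed, and the tensor product of any
two non-invertible simples is a direct sum of invertibles. -/
def GeneralizedTY (C : FusionData) : Prop :=
  ¬ C.Pointed ∧ ∀ i j : C.I, C.dim i ≠ 1 → C.dim j ≠ 1 →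
    ∀ k, 0 < C.N i j k → C.dim k = 1

/-- A grading of `C` by a group `G`. -/
structure Grading (C : FusionData) (G : Type*) [Group G] where
  deg : C.I → G
  deg_one : deg C.one = 1
  deg_mul : ∀ i j k, 0 < C.N i j k → deg k = deg i * deg j
  deg_dual : ∀ i, deg (C.dual i) = (deg i)⁻¹

/-- A grading is faithful if every component is nonzero, equivalently the
degree map is surjective. -/
def Grading.Faithful {C : FusionData} {G : Type*} [Group G] (g : C.Grading G) : Prop :=
  Function.Surjective g.deg

/-- A `ℤ_q`-extension of a pointed fusion category: a faithful `ℤ_q`-grading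
whose trivial component is pointed. -/
structure ZqExtension (C : FusionData) (q : ℕ) where
  grading : C.Grading (Multiplicative (ZMod q))
  faithful : Function.Surjective grading.deg
  trivial_pointed : ∀ i, grading.deg i = 1 → C.dim i = 1

/-- `C` is tensor equivalent to the Deligne product `B ⊠ E`. -/
def IsDeligneProd (C B E : FusionData) : Prop :=
  ∃ e : C.I ≃ B.I × E.I,
    e C.one = (B.one, E.one) ∧
    (∀ i, e (C.dual i) = (B.dual (e i).1, E.dual (e i).2)) ∧
    (∀ i j k, C.N i j k = B.N (e i).1 (e j).1 (e k).1 * E.N (e i).2 (e j).2 (e k).2) ∧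
    (∀ i, C.dim i = B.dim (e i).1 * E.dim (e i).2)

/-- `C` is tensor equivalent to the Deligne product of the finite family `F`. -/
def IsDelignePi (C : FusionData) {t : ℕ} (F : Fin t → FusionData) : Prop :=
  ∃ e : C.I ≃ ∀ s, (F s).I,
    (e C.one = fun s => (F s).one) ∧
    (∀ i s, e (C.dual i) s = (F s).dual (e i s)) ∧
    (∀ i j k, C.N i j k = ∏ s, (F s).N (e i s) (e j s) (e k s)) ∧
    (∀ i, C.dim i = ∏ s, (F s).dim (e i s))

/-- A fusion category of type `(1, m; α, n)`: `m` invertible simples, `n`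
simples of FP dimension `α > 1`, and no others. -/
def OfType₂ (C : FusionData) (α : ℝ) (m n : ℕ) : Prop :=
  1 < α ∧ (∀ i : C.I, C.dim i = 1 ∨ C.dim i = α) ∧
    Nat.card {i : C.I // C.dim i = 1} = m ∧ Nat.card {i : C.I // C.dim i = α} = n

/-- An Ising category: three simples `1, g, X` with `g` invertible, `g ≠ 1`,
`FPdim X = √2` and `X ⊗ X ≅ 1 ⊕ g`. -/
def IsIsing (C : FusionData) : Prop :=
  C.n = 3 ∧ ¬ C.Pointed ∧ C.FPdim = 4 ∧
    ∃ g X : C.I, g ≠ C.one ∧ C.dim g = 1 ∧ C.dim X = Real.sqrt 2 ∧ C.dual X = X ∧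
      C.N X X C.one = 1 ∧ C.N X X g = 1 ∧ ∀ k, 0 < C.N X X k → k = C.one ∨ k = g

/-- Modularity at the Grothendieck-ring level: braided together with a
symmetric nondegenerate S-matrix satisfying the Verlinde relations and
normalized by FP dimensions on the row of the unit. -/
def Modular (C : FusionData) : Prop :=
  C.Braided ∧
    ∃ s : Matrix C.I C.I ℂ,
      (∀ i j, s i j = s j i) ∧
      (∀ i, s C.one i = (C.dim i : ℂ)) ∧
      (∀ i j k, s i j * s i k = (C.dim i : ℂ) * ∑ l, (C.N j k l : ℂ) * s i l) ∧
      IsUnit s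

/-- A ring-level Morita context between two fusion categories: a based
`(C, D)`-bimodule with commuting indecomposable actions and equal global
FP dimensions. -/
structure MoritaContext (C D : FusionData) where
  m : ℕ
  actL : C.I → Fin m → Fin m → ℕ
  actR : D.I → Fin m → Fin m → ℕ
  actL_one : ∀ x y, actL C.one x y = if y = x then 1 else 0
  actR_one : ∀ x y, actR D.one x y = if y = x then 1 else 0
  actL_assoc : ∀ i j x z, (∑ k, C.N i j k * actL k x z) = ∑ y, actL j x y * actL i y z
  actR_assoc : ∀ i j x z, (∑ k, D.N i j k * actR k x z) = ∑ y, actR i x y * actR j y z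
  commute : ∀ i j x z, (∑ y, actL i x y * actR j y z) = ∑ y, actR j x y * actL i y z
  indecL : ∀ x y, ∃ i, 0 < actL i x y
  indecR : ∀ x y, ∃ j, 0 < actR j x y
  fpdim_eq : C.FPdim = D.FPdim

/-- (Categorical) Morita equivalence, encoded at the ring level. -/
def MoritaEquiv (C D : FusionData) : Prop := Nonempty (MoritaContext C D)

/-- Group-theoretical: Morita equivalent to a pointed fusion category. -/
def GroupTheoretical (C : FusionData) : Prop :=
  ∃ D : FusionData, D.Pointed ∧ MoritaEquiv C D

end FusionData

/-!
Since `C` is not pointed and `q` is prime, every invertible object has trivial `ℤ_q`-degree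
(otherwise translating by invertibles would make every simple invertible), so the trivial
component is `C_pt` and `FPdim C = q · |G(C)|`.

For invertible `g`, the values `ψ_i(g) = s_{ig}/d_i` have modulus one, and the Verlinde formula
for the row of `g` expresses `ψ_j(g) ψ_k(g)` as a convex combination of the `ψ_l(g)`,
`l ⊆ j ⊗ k`; by the equality case of the triangle inequality, `i ↦ ψ_i|_{G(C)}` is a grading
of `C`. Its degrees form a group of characters of `G(C)` which separates points because `s` is
invertible, so there are exactly `|G(C)|` of them, and its trivial component `Z`, the
centralizer of `C_pt`, has FP dimension `FPdim C / |G(C)| = q` and contains `C_ad`.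

For a simple `X`, `X ⊗ X⋆` has degree zero, hence is the sum of the invertibles fixing `X`, so
`FPdim(X)² = |Stab X|` with `Stab X ≤ Z ∩ G(C)`. Restricting the `ℤ_q`-grading to `Z` gives
`q = |deg Z| · |Z ∩ G(C)|`, and a non-invertible `X` forces `|Z ∩ G(C)| > 1`; as `q` is prime,
`Z ⊆ C_pt` has order `q` and every `Stab X` (of order dividing `q` and `> 1`) is all of `Z`. Hence
`FPdim(X)² = q` and `C_ad = Z`.
-/

theorem card_monoidHom_complexUnits_le (G : Type*) [Group G] [Finite G] :
    Nat.card (G →* ℂˣ) ≤ Nat.card G := by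
  rw [Nat.card_congr Abelianization.lift, CommGroup.card_monoidHom_of_hasEnoughRootsOfUnity]
  exact Nat.card_le_card_of_surjective _ (QuotientGroup.mk'_surjective _)

theorem Complex.eq_of_sum_mul_eq {ι : Type*} (s : Finset ι) {a : ι → ℝ} {z : ι → ℂ}
    {u : ℂ} (ha : ∀ i ∈ s, 0 ≤ a i) (hz : ∀ i ∈ s, ‖z i‖ ≤ 1) (hu : ‖u‖ = 1)
    (h : ∑ i ∈ s, (a i : ℂ) * z i = (∑ i ∈ s, a i : ℝ) * u) {i : ι} (hi : i ∈ s)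
    (hai : 0 < a i) : z i = u := by
  set w : ι → ℂ := fun i => z i * starRingEnd ℂ u with hw
  have huu : u * starRingEnd ℂ u = 1 := by
    rw [Complex.mul_conj', hu]; norm_num
  have hwnorm : ∀ i ∈ s, ‖w i‖ ≤ 1 := fun i hi => by simpa [hw, hu] using hz i hi
  have hsum : ∑ i ∈ s, a i * (1 - (w i).re) = 0 := by
    have := congrArg (fun c => (c * starRingEnd ℂ u).re) h
    simp only [Finset.sum_mul, mul_assoc, huu, mul_one, Complex.re_sum, Complex.re_ofReal_mul,
      Complex.ofReal_re] at this
    simp only [mul_sub, mul_one, Finset.sum_sub_distrib, hw, this, sub_self]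
  have hre : (w i).re = 1 := by
    have := (Finset.sum_eq_zero_iff_of_nonneg fun i hi =>
      mul_nonneg (ha i hi) (sub_nonneg.2 ((Complex.re_le_norm _).trans (hwnorm i hi)))).1 hsum i hi
    rcases mul_eq_zero.1 this with h0 | h0
    · exact absurd h0 hai.ne'
    · linarith
  have hw1 : w i = 1 := by
    have hnorm := Complex.sq_norm (w i)
    rw [Complex.normSq_apply] at hnorm
    have him : (w i).im = 0 := by nlinarith [norm_nonneg (w i), hwnorm i hi]
    exact Complex.ext hre him
  have hzw : z i = w i * u := by
    simp only [hw, mul_assoc, mul_comm (starRingEnd ℂ u) u, huu, mul_one]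
  rw [hzw, hw1, one_mul]

namespace FusionData

variable {C : FusionData} {q : ℕ}

section Basic

lemma dim_pos (i : C.I) : 0 < C.dim i := one_pos.trans_le (C.dim_ge_one i)

lemma exists_dim_ne_one (hnp : ¬ C.Pointed) : ∃ X, C.dim X ≠ 1 := by
  simpa [Pointed] using hnp

lemma dual_involutive : Function.Involutive C.dual := C.dual_dual

lemma N_pos_dual_one (i : C.I) : 0 < C.N i (C.dual i) C.one := by
  simp [C.N_dual]

lemma N_one_one_pos : 0 < C.N C.one C.one C.one := by simp [C.N_one_left]

lemma N_rotate (i j k : C.I) : C.N i j k = C.N j (C.dual k) (C.dual i) := by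
  simpa [C.N_dual, dual_involutive.injective.eq_iff, eq_comm] using C.N_assoc i j (C.dual k) C.one

lemma N_rotate₂ (i j k : C.I) : C.N i j k = C.N (C.dual k) i (C.dual j) := by
  rw [N_rotate, N_rotate, C.dual_dual]

lemma sum_N_mul_dim_middle (i k : C.I) :
    ∑ j, (C.N i j k : ℝ) * C.dim j = C.dim i * C.dim k := by
  calc ∑ j, (C.N i j k : ℝ) * C.dim j
      = ∑ j, (C.N (C.dual k) i (C.dual j) : ℝ) * C.dim (C.dual j) := by
        simp only [← N_rotate₂, C.dim_dual]
    _ = ∑ j, (C.N (C.dual k) i j : ℝ) * C.dim j :=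
        Equiv.sum_comp (dual_involutive.toPerm _) fun j => (C.N (C.dual k) i j : ℝ) * C.dim j
    _ = C.dim i * C.dim k := by rw [← C.dim_mul, C.dim_dual, mul_comm]

lemma dim_le_mul_of_N_pos {i j k : C.I} (h : 0 < C.N i j k) : C.dim k ≤ C.dim i * C.dim j := by
  rw [C.dim_mul]
  calc C.dim k ≤ C.N i j k * C.dim k :=
        le_mul_of_one_le_left (dim_pos k).le (by exact_mod_cast h)
    _ ≤ ∑ l, (C.N i j l : ℝ) * C.dim l :=
        Finset.single_le_sum (fun l _ => mul_nonneg (Nat.cast_nonneg _) (dim_pos l).le)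
          (Finset.mem_univ k)

lemma exists_N_pos (i j : C.I) : ∃ k, 0 < C.N i j k := by
  by_contra! h
  have h0 := C.dim_mul i j
  simp only [Nat.le_zero.mp (h _), Nat.cast_zero, zero_mul, Finset.sum_const_zero] at h0
  exact (mul_pos (dim_pos i) (dim_pos j)).ne' h0

end Basic

section Invertible

variable {g h : C.I}

lemma dim_eq_of_N_pos (hg : C.dim g = 1) {i k : C.I} (hk : 0 < C.N g i k) :
    C.dim k = C.dim i := by
  have hle : C.dim k ≤ C.dim i := by simpa [hg] using dim_le_mul_of_N_pos hk
  have hge : C.dim (C.dual i) ≤ C.dim (C.dual k) * C.dim g :=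
    dim_le_mul_of_N_pos (by rwa [← N_rotate₂])
  rw [C.dim_dual, C.dim_dual, hg, mul_one] at hge
  exact le_antisymm hle hge

lemma sum_N_eq_one (hg : C.dim g = 1) (i : C.I) : ∑ k, C.N g i k = 1 := by
  have h : (∑ k, C.N g i k : ℝ) * C.dim i = 1 * C.dim i := by
    rw [one_mul, Finset.sum_mul]
    calc ∑ k, (C.N g i k : ℝ) * C.dim i = ∑ k, (C.N g i k : ℝ) * C.dim k := by
          refine Finset.sum_congr rfl fun k _ => ?_
          rcases (C.N g i k).eq_zero_or_pos with h0 | hpos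
          · simp [h0]
          · rw [dim_eq_of_N_pos hg hpos]
      _ = C.dim i := by rw [← C.dim_mul, hg, one_mul]
  exact_mod_cast mul_right_cancel₀ (dim_pos i).ne' h

/-- Some simple constituent of `g ⊗ i`; for invertible `g` it is `g ⊗ i` itself. -/
noncomputable def act (C : FusionData) (g i : C.I) : C.I := (exists_N_pos g i).choose

lemma N_act_pos (g i : C.I) : 0 < C.N g i (C.act g i) := (exists_N_pos g i).choose_spec

lemma N_eq_ite_act (hg : C.dim g = 1) (i k : C.I) :
    C.N g i k = if k = C.act g i then 1 else 0 := by
  have hsum := sum_N_eq_one hg i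
  have hpos := N_act_pos g i
  rw [← Finset.add_sum_erase _ _ (Finset.mem_univ (C.act g i))] at hsum
  split_ifs with hk
  · subst hk; omega
  · have := Finset.single_le_sum (f := C.N g i) (fun _ _ => Nat.zero_le _)
      (Finset.mem_erase.2 ⟨hk, Finset.mem_univ k⟩)
    linarith

lemma act_eq_of_N_pos (hg : C.dim g = 1) {i k : C.I} (hk : 0 < C.N g i k) : C.act g i = k := by
  by_contra hne
  rw [N_eq_ite_act hg, if_neg (Ne.symm hne)] at hk
  exact hk.false

lemma dim_act (hg : C.dim g = 1) (i : C.I) : C.dim (C.act g i) = C.dim i :=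
  dim_eq_of_N_pos hg (N_act_pos g i)

lemma act_act (hg : C.dim g = 1) (hh : C.dim h = 1) (i : C.I) :
    C.act (C.act g h) i = C.act g (C.act h i) := by
  have hN : ∀ l, C.N (C.act g h) i l = C.N g (C.act h i) l := fun l => by
    simpa [N_eq_ite_act hg h, N_eq_ite_act hh i, ite_mul] using C.N_assoc g h i l
  exact act_eq_of_N_pos (by rwa [dim_act hg]) (by rw [hN]; exact N_act_pos _ _)

lemma act_one_left (i : C.I) : C.act C.one i = i :=
  act_eq_of_N_pos C.dim_one (by simp [C.N_one_left])

lemma act_one_right (hg : C.dim g = 1) : C.act g C.one = g :=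
  act_eq_of_N_pos hg (by simp [C.N_one_right])

lemma act_dual_self (hg : C.dim g = 1) : C.act (C.dual g) g = C.one :=
  act_eq_of_N_pos (by rwa [C.dim_dual]) (by simpa [C.dual_dual] using N_pos_dual_one (C.dual g))

end Invertible

/-- The group `G(C)` of invertible simple objects. -/
abbrev Invertibles (C : FusionData) : Type := {g : C.I // C.dim g = 1}

noncomputable instance : Group C.Invertibles where
  mul g h := ⟨C.act g h, by rw [dim_act g.2]; exact h.2⟩
  one := ⟨C.one, C.dim_one⟩
  inv g := ⟨C.dual g, by rw [C.dim_dual]; exact g.2⟩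
  mul_assoc a b c := Subtype.ext (act_act a.2 b.2 c)
  one_mul a := Subtype.ext (act_one_left a.1)
  mul_one a := Subtype.ext (act_one_right a.2)
  inv_mul_cancel a := Subtype.ext (act_dual_self a.2)

lemma Invertibles.coe_mul (a b : C.Invertibles) : ((a * b : C.Invertibles) : C.I) = C.act a b := rfl

lemma Invertibles.coe_inv (a : C.Invertibles) : ((a⁻¹ : C.Invertibles) : C.I) = C.dual a := rfl

noncomputable instance : MulAction C.Invertibles C.I where
  smul g i := C.act g i
  one_smul i := act_one_left i
  mul_smul a b i := act_act a.2 b.2 i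

lemma Invertibles.smul_def (a : C.Invertibles) (i : C.I) : a • i = C.act a i := rfl

lemma N_dual_coe_eq_ite (X : C.I) (g : C.Invertibles) :
    C.N X (C.dual X) g = if g ∈ MulAction.stabilizer C.Invertibles X then 1 else 0 := by
  have hmem : X = C.act (g⁻¹ : C.Invertibles) X ↔
      g ∈ MulAction.stabilizer C.Invertibles X := by
    rw [← inv_mem_iff, MulAction.mem_stabilizer_iff, Invertibles.smul_def, eq_comm]
  rw [N_rotate₂, C.dual_dual, ← Invertibles.coe_inv, N_eq_ite_act (g⁻¹).2]
  exact if_congr hmem rfl rfl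

lemma dim_sq_eq_card_stabilizer (X : C.I) (hX : ∀ l, 0 < C.N X (C.dual X) l → C.dim l = 1) :
    C.dim X ^ 2 = Nat.card (MulAction.stabilizer C.Invertibles X) := by
  classical
  have hzero : ∀ l : {l // ¬ C.dim l = 1}, (C.N X (C.dual X) l : ℝ) * C.dim l = 0 :=
      fun l => by
    have : C.N X (C.dual X) l = 0 := Nat.eq_zero_of_not_pos fun h => l.2 (hX l h)
    simp [this]
  have h := C.dim_mul X (C.dual X)
  rw [C.dim_dual, ← Fintype.sum_subtype_add_sum_subtype (fun l => C.dim l = 1),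
    Finset.sum_eq_zero fun l _ => hzero l, add_zero] at h
  rw [sq, h]
  have hd : ∀ g : C.Invertibles, C.dim g = 1 := fun g => g.2
  simp [N_dual_coe_eq_ite, hd, Nat.card_eq_fintype_card, Fintype.card_subtype, Finset.sum_boole]

namespace Sub

instance : Top C.Sub :=
  ⟨{ carrier := Set.univ
     one_mem := trivial
     dual_mem := fun _ _ => trivial
     mul_mem := fun _ _ _ _ _ _ => trivial }⟩

lemma top_carrier : (⊤ : C.Sub).carrier = Set.univ := rfl

lemma mem_iff_of_N_pos (D : C.Sub) {i j k : C.I} (hi : i ∈ D.carrier) (h : 0 < C.N i j k) :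
    j ∈ D.carrier ↔ k ∈ D.carrier := by
  refine ⟨fun hj => D.mul_mem i hi j hj k h, fun hk => ?_⟩
  rw [N_rotate₂] at h
  simpa [C.dual_dual] using D.dual_mem _ (D.mul_mem _ (D.dual_mem k hk) i hi _ h)

lemma gen_subset (D : C.Sub) {S : Set C.I} (hS : S ⊆ D.carrier) :
    {k | C.gen S k} ⊆ D.carrier := by
  intro k hk
  induction hk with
  | base h => exact hS h
  | one => exact D.one_mem
  | dual _ ih => exact D.dual_mem _ ih
  | mul _ _ hN ih₁ ih₂ => exact D.mul_mem _ ih₁ _ ih₂ _ hN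

def pointedPart (D : C.Sub) : Subgroup C.Invertibles where
  carrier := {g | (g : C.I) ∈ D.carrier}
  mul_mem' {a b} ha hb := D.mul_mem _ ha _ hb _ (N_act_pos a.1 b.1)
  one_mem' := D.one_mem
  inv_mem' ha := D.dual_mem _ ha

lemma stabilizer_le_pointedPart (D : C.Sub) (hD : C.adSet ⊆ D.carrier) (X : C.I) :
    MulAction.stabilizer C.Invertibles X ≤ D.pointedPart := fun g hg =>
  hD (gen.base ⟨X, by rw [N_dual_coe_eq_ite, if_pos hg]; exact one_pos⟩)

end Sub

section FPdim

lemma FPdim_eq_FPdimSet_univ : C.FPdim = C.FPdimSet Set.univ := by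
  simp [FPdim, FPdimSet]

lemma FPdimSet_eq_sum_filter (S : Set C.I) [DecidablePred (· ∈ S)] :
    C.FPdimSet S = ∑ i ∈ Finset.univ.filter (· ∈ S), C.dim i ^ 2 := by
  rw [Finset.sum_filter, FPdimSet]
  congr!

lemma FPdimSet_eq_of_N_pos_iff (i₀ : C.I) {A B : Set C.I}
    (hAB : ∀ j k, 0 < C.N i₀ j k → (j ∈ A ↔ k ∈ B)) : C.FPdimSet A = C.FPdimSet B := by
  classical
  set f : C.I → C.I → ℝ := fun j k => C.N i₀ j k * C.dim j * C.dim k with hf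
  have hA : ∑ j, ∑ k, (if j ∈ A then f j k else 0) = C.dim i₀ * C.FPdimSet A := by
    rw [FPdimSet, Finset.mul_sum]
    refine Finset.sum_congr rfl fun j _ => ?_
    split_ifs
    · simp only [hf, mul_right_comm _ (C.dim j), ← Finset.sum_mul, ← C.dim_mul]
      ring
    · simp
  have hB : ∑ k, ∑ j, (if k ∈ B then f j k else 0) = C.dim i₀ * C.FPdimSet B := by
    rw [FPdimSet, Finset.mul_sum]
    refine Finset.sum_congr rfl fun k _ => ?_
    split_ifs
    · simp only [hf, ← Finset.sum_mul, sum_N_mul_dim_middle]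
      ring
    · simp
  have hterm : ∀ j k, (if j ∈ A then f j k else 0) = if k ∈ B then f j k else 0 := by
    intro j k
    by_cases h : 0 < C.N i₀ j k
    · simp only [hAB j k h]
    · simp [hf, Nat.eq_zero_of_not_pos h]
  refine mul_left_cancel₀ (dim_pos i₀).ne' ?_
  rw [← hA, ← hB, Finset.sum_comm]
  simp only [hterm]

lemma FPdimSet_inter_ptSet (D : C.Sub) :
    C.FPdimSet (D.carrier ∩ C.ptSet) = Nat.card D.pointedPart := by
  classical
  rw [FPdimSet_eq_sum_filter, Finset.sum_congr rfl fun i hi => by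
    rw [show C.dim i = 1 from (Finset.mem_filter.1 hi).2.2, one_pow]]
  have e : D.pointedPart ≃ {i // i ∈ D.carrier ∩ C.ptSet} :=
    (Equiv.subtypeSubtypeEquivSubtypeInter (fun i => C.dim i = 1) (· ∈ D.carrier)).trans
      (Equiv.subtypeEquivRight fun _ => and_comm)
  rw [Finset.sum_const, nsmul_one, Nat.card_congr e, Nat.card_eq_fintype_card,
    Fintype.card_subtype]

end FPdim

section Grading

variable {G : Type*} [Group G]

def Grading.ofDegMul (deg : C.I → G) (hdeg : ∀ i j k, 0 < C.N i j k → deg k = deg i * deg j) :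
    C.Grading G :=
  have hone : deg C.one = 1 := by simpa using hdeg _ _ _ (N_one_one_pos (C := C))
  { deg
    deg_one := hone
    deg_mul := hdeg
    deg_dual i := eq_inv_of_mul_eq_one_right (by rw [← hdeg _ _ _ (N_pos_dual_one i), hone]) }

variable (gr : C.Grading G)

lemma Grading.deg_act (g i : C.I) :
    gr.deg (C.act g i) = gr.deg g * gr.deg i :=
  gr.deg_mul _ _ _ (N_act_pos g i)

def Grading.degHom : C.Invertibles →* G where
  toFun g := gr.deg g
  map_one' := gr.deg_one
  map_mul' a b := gr.deg_act a b

def Grading.ker : C.Sub where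
  carrier := {i | gr.deg i = 1}
  one_mem := gr.deg_one
  dual_mem := fun i (hi : gr.deg i = 1) => by simp [hi, gr.deg_dual]
  mul_mem := fun i (hi : gr.deg i = 1) j (hj : gr.deg j = 1) k hk => by
    simp [gr.deg_mul i j k hk, hi, hj]

lemma Grading.ker_carrier : gr.ker.carrier = {i | gr.deg i = 1} := rfl

def Grading.degRange : Subgroup G where
  carrier := Set.range gr.deg
  mul_mem' := by
    rintro _ _ ⟨i, rfl⟩ ⟨j, rfl⟩
    obtain ⟨k, hk⟩ := exists_N_pos i j
    exact ⟨k, gr.deg_mul i j k hk⟩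
  one_mem' := ⟨C.one, gr.deg_one⟩
  inv_mem' := by
    rintro _ ⟨i, rfl⟩
    exact ⟨C.dual i, gr.deg_dual i⟩

lemma Grading.adjointGenerators_subset_ker : C.adjointGenerators ⊆ gr.ker.carrier := by
  rintro l ⟨X, hX⟩
  simp [Grading.ker, gr.deg_mul _ _ _ hX, gr.deg_dual]

lemma Grading.adSet_subset_ker : C.adSet ⊆ gr.ker.carrier :=
  gr.ker.gen_subset gr.adjointGenerators_subset_ker

lemma Grading.FPdimSet_inter_fiber_eq (D : C.Sub) {i₀ : C.I} (hi₀ : i₀ ∈ D.carrier)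
    (y : G) :
    C.FPdimSet (D.carrier ∩ {i | gr.deg i = y}) =
      C.FPdimSet (D.carrier ∩ {i | gr.deg i = gr.deg i₀ * y}) :=
  FPdimSet_eq_of_N_pos_iff i₀ fun j k h => by
    simp only [Set.mem_inter_iff, Set.mem_ofPred_eq, gr.deg_mul _ _ _ h, mul_right_inj,
      D.mem_iff_of_N_pos hi₀ h]

lemma Grading.FPdimSet_fiber_eq (i : C.I) :
    C.FPdimSet {j | gr.deg j = gr.deg i} = C.FPdimSet gr.ker.carrier := by
  simpa [Sub.top_carrier, gr.ker_carrier] using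
    (gr.FPdimSet_inter_fiber_eq ⊤ (Set.mem_univ i) 1).symm

lemma Grading.FPdimSet_eq_ncard_mul (D : C.Sub) :
    C.FPdimSet D.carrier =
      (gr.deg '' D.carrier).ncard * C.FPdimSet (D.carrier ∩ gr.ker.carrier) := by
  classical
  set s := Finset.univ.filter (· ∈ D.carrier) with hs
  have hcard : (gr.deg '' D.carrier).ncard = (s.image gr.deg).card := by
    rw [← Set.ncard_coe_finset]
    simp [hs]
  have hfiber : ∀ y ∈ s.image gr.deg, C.FPdimSet (D.carrier ∩ {i | gr.deg i = y}) =
      C.FPdimSet (D.carrier ∩ gr.ker.carrier) := by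
    intro y hy
    obtain ⟨i₀, hi₀, rfl⟩ := Finset.mem_image.1 hy
    simpa [gr.ker_carrier] using (gr.FPdimSet_inter_fiber_eq D (Finset.mem_filter.1 hi₀).2 1).symm
  calc C.FPdimSet D.carrier = ∑ i ∈ s, C.dim i ^ 2 := FPdimSet_eq_sum_filter _
    _ = ∑ y ∈ s.image gr.deg, ∑ i ∈ s with gr.deg i = y, C.dim i ^ 2 :=
        (Finset.sum_fiberwise_of_maps_to (fun i hi => Finset.mem_image_of_mem _ hi) _).symm
    _ = ∑ y ∈ s.image gr.deg, C.FPdimSet (D.carrier ∩ {i | gr.deg i = y}) := by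
        refine Finset.sum_congr rfl fun y _ => ?_
        rw [FPdimSet_eq_sum_filter]
        exact Finset.sum_congr (by ext; simp [hs]) fun _ _ => rfl
    _ = _ := by
        rw [Finset.sum_congr rfl hfiber, Finset.sum_const, nsmul_eq_mul, hcard]

lemma Grading.FPdim_eq_card_degRange_mul :
    C.FPdim = Nat.card gr.degRange * C.FPdimSet gr.ker.carrier := by
  have h := gr.FPdimSet_eq_ncard_mul ⊤
  rwa [Sub.top_carrier, Set.image_univ, Set.univ_inter, ← FPdim_eq_FPdimSet_univ,
    ← Nat.card_coe_set_eq] at h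

end Grading

namespace ZqExtension

lemma deg_coe_eq_one (ext : C.ZqExtension q) (hq : q.Prime) (hnp : ¬ C.Pointed)
    (g : C.Invertibles) :
    ext.grading.deg g = 1 := by
  have : Fact (Nat.card (Multiplicative (ZMod q))).Prime :=
    ⟨by rwa [Nat.card_congr Multiplicative.toAdd, Nat.card_zmod]⟩
  rcases ext.grading.degHom.range.eq_bot_or_eq_top_of_prime_card with h | h
  · exact DFunLike.congr_fun (MonoidHom.range_eq_bot_iff.1 h) g
  · refine absurd (fun j => ?_) hnp
    obtain ⟨a, ha⟩ := MonoidHom.range_eq_top.1 h (ext.grading.deg j)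
    have hdeg : ext.grading.deg (a⁻¹ • j) = 1 := by
      rw [Invertibles.smul_def, ext.grading.deg_act, Invertibles.coe_inv, ext.grading.deg_dual,
        ← ha]
      exact inv_mul_cancel _
    rw [← dim_act (a⁻¹).2 j]
    exact ext.trivial_pointed _ hdeg

lemma ker_carrier_eq_ptSet (ext : C.ZqExtension q) (hq : q.Prime) (hnp : ¬ C.Pointed) :
    ext.grading.ker.carrier = C.ptSet :=
  Set.ext fun i => ⟨ext.trivial_pointed i, fun hi => ext.deg_coe_eq_one hq hnp ⟨i, hi⟩⟩

lemma FPdimSet_eq_ncard_mul_card (ext : C.ZqExtension q) (hq : q.Prime) (hnp : ¬ C.Pointed)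
    (D : C.Sub) :
    C.FPdimSet D.carrier = (ext.grading.deg '' D.carrier).ncard * Nat.card D.pointedPart := by
  rw [ext.grading.FPdimSet_eq_ncard_mul D, ext.ker_carrier_eq_ptSet hq hnp, FPdimSet_inter_ptSet]

lemma FPdim_eq (ext : C.ZqExtension q) (hq : q.Prime) (hnp : ¬ C.Pointed) :
    C.FPdim = q * Nat.card C.Invertibles := by
  rw [FPdim_eq_FPdimSet_univ, ← Sub.top_carrier, ext.FPdimSet_eq_ncard_mul_card hq hnp,
    Sub.top_carrier, Set.image_univ_of_surjective ext.faithful, Set.ncard_univ,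
    Nat.card_congr Multiplicative.toAdd, Nat.card_zmod,
    Nat.card_congr
      (Equiv.subtypeUnivEquiv fun _ => trivial : (⊤ : C.Sub).pointedPart ≃ C.Invertibles)]

lemma dim_sq_eq_card_stabilizer (ext : C.ZqExtension q) (X : C.I) :
    C.dim X ^ 2 = Nat.card (MulAction.stabilizer C.Invertibles X) :=
  FusionData.dim_sq_eq_card_stabilizer X fun l hl =>
    ext.trivial_pointed l (ext.grading.adjointGenerators_subset_ker ⟨X, hl⟩)

lemma one_lt_card_stabilizer (ext : C.ZqExtension q) {X : C.I} (hX : C.dim X ≠ 1) :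
    1 < Nat.card (MulAction.stabilizer C.Invertibles X) := by
  have h1 : 1 < C.dim X := (C.dim_ge_one X).lt_of_ne' hX
  have : (1 : ℝ) < Nat.card (MulAction.stabilizer C.Invertibles X) := by
    rw [← ext.dim_sq_eq_card_stabilizer]; nlinarith
  exact_mod_cast this

end ZqExtension

structure SMatrix (C : FusionData) where
  s : Matrix C.I C.I ℂ
  symm : ∀ i j, s i j = s j i
  one_row : ∀ i, s C.one i = C.dim i
  verlinde : ∀ i j k, s i j * s i k = (C.dim i : ℂ) * ∑ l, (C.N j k l : ℂ) * s i l
  isUnit : IsUnit s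

lemma Modular.nonempty_sMatrix (h : C.Modular) : Nonempty C.SMatrix := by
  obtain ⟨-, s, h₁, h₂, h₃, h₄⟩ := h
  exact ⟨⟨s, h₁, h₂, h₃, h₄⟩⟩

namespace SMatrix

variable (S : C.SMatrix)

lemma dim_ne_zero_complex (i : C.I) : (C.dim i : ℂ) ≠ 0 := by
  exact_mod_cast (dim_pos i).ne'

lemma col_injective {x y : C.I} (h : ∀ i, S.s i x = S.s i y) : x = y := by
  classical
  have hcol : S.s.mulVec (Pi.single x 1) = S.s.mulVec (Pi.single y 1) := by
    rw [Matrix.mulVec_single_one, Matrix.mulVec_single_one]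
    exact funext h
  have := congrFun (Matrix.mulVec_injective_iff_isUnit.2 S.isUnit hcol) x
  by_contra hxy
  simp [hxy] at this

noncomputable def psi (i j : C.I) : ℂ := S.s i j / C.dim i

lemma psi_mul_psi (i j k : C.I) :
    S.psi i j * S.psi i k = ∑ l, (C.N j k l : ℂ) * S.psi i l := by
  rw [psi, psi, div_mul_div_comm, S.verlinde, mul_div_mul_left _ _ (dim_ne_zero_complex i),
    Finset.sum_div]
  simp only [psi, mul_div_assoc]

lemma psi_one_right (i : C.I) : S.psi i C.one = 1 := by
  rw [psi, S.symm, S.one_row, div_self (dim_ne_zero_complex i)]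

lemma psi_coe_left (g : C.Invertibles) (x : C.I) : S.psi g x = C.dim x * S.psi x g := by
  rw [psi, psi, g.2, S.symm, Complex.ofReal_one, div_one,
    mul_div_cancel₀ _ (dim_ne_zero_complex x)]

noncomputable def rowChar (i : C.I) : C.Invertibles →* ℂ where
  toFun g := S.psi i g
  map_one' := S.psi_one_right i
  map_mul' g h := by
    rw [Invertibles.coe_mul, psi_mul_psi]
    simp [N_eq_ite_act g.2]

lemma rowChar_apply (i : C.I) (g : C.Invertibles) : S.rowChar i g = S.psi i g := rfl

lemma norm_psi_coe (i : C.I) (g : C.Invertibles) : ‖S.psi i g‖ = 1 :=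
  Complex.norm_eq_one_of_pow_eq_one
    (by rw [← rowChar_apply, ← map_pow, pow_orderOf_eq_one, map_one]) (orderOf_pos g).ne'

lemma psi_coe_of_N_pos (g : C.Invertibles) {j k l : C.I} (h : 0 < C.N j k l) :
    S.psi l g = S.psi j g * S.psi k g := by
  refine Complex.eq_of_sum_mul_eq Finset.univ (a := fun x => C.N j k x * C.dim x)
    (fun x _ => mul_nonneg (Nat.cast_nonneg _) (dim_pos x).le)
    (fun x _ => (S.norm_psi_coe x g).le) (by rw [norm_mul, norm_psi_coe, norm_psi_coe, one_mul])
    ?_ (Finset.mem_univ l) (mul_pos (by exact_mod_cast h) (dim_pos l))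
  have hchar := S.psi_mul_psi g j k
  simp only [psi_coe_left] at hchar
  rw [← C.dim_mul]
  push_cast
  simp_rw [mul_assoc]
  rw [← hchar]
  ring

noncomputable def charGrading : C.Grading (C.Invertibles →* ℂˣ) :=
  Grading.ofDegMul (fun i => (S.rowChar i).toHomUnits) fun j k l h =>
    MonoidHom.ext fun g => Units.ext <| by
      simp [rowChar_apply, S.psi_coe_of_N_pos g h]

/-- The simples `i` with `ψ_i(g) = 1` for every invertible `g`: the centralizer of `C_pt`. -/
noncomputable def ptCentralizer : C.Sub := S.charGrading.ker

lemma card_degRange_charGrading : Nat.card S.charGrading.degRange = Nat.card C.Invertibles := by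
  set T := S.charGrading.degRange
  refine le_antisymm ((Subgroup.card_le_card_group T).trans (card_monoidHom_complexUnits_le _)) ?_
  have hinj : Function.Injective fun g : C.Invertibles => (MonoidHom.eval g).comp T.subtype := by
    intro g h hgh
    refine Subtype.ext (S.col_injective fun i => ?_)
    have : S.s i g / C.dim i = S.s i h / C.dim i :=
      congrArg (fun χ : T →* ℂˣ => (χ ⟨S.charGrading.deg i, i, rfl⟩ : ℂ)) hgh
    exact (div_left_inj' (dim_ne_zero_complex i)).1 this
  exact (Nat.card_le_card_of_injective _ hinj).trans (card_monoidHom_complexUnits_le T)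

lemma FPdimSet_ptCentralizer (hq : q.Prime) (ext : C.ZqExtension q)
    (hnp : ¬ C.Pointed) : C.FPdimSet S.ptCentralizer.carrier = q := by
  have h := S.charGrading.FPdim_eq_card_degRange_mul
  rw [ext.FPdim_eq hq hnp, S.card_degRange_charGrading] at h
  have hpos : (0 : ℝ) < Nat.card C.Invertibles := by
    exact_mod_cast Nat.card_pos (α := C.Invertibles)
  exact mul_left_cancel₀ hpos.ne' (by rw [ptCentralizer, ← h, mul_comm])

lemma card_pointedPart_ptCentralizer (hq : q.Prime) (ext : C.ZqExtension q)
    (hnp : ¬ C.Pointed) :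
    Nat.card S.ptCentralizer.pointedPart = q ∧ S.ptCentralizer.carrier ⊆ C.ptSet := by
  set Z := S.ptCentralizer
  obtain ⟨X, hX⟩ := exists_dim_ne_one hnp
  have hP : 1 < Nat.card Z.pointedPart := (ext.one_lt_card_stabilizer hX).trans_le
    (Subgroup.card_le_of_le (Z.stabilizer_le_pointedPart S.charGrading.adSet_subset_ker X))
  have hq_eq : (ext.grading.deg '' Z.carrier).ncard * Nat.card Z.pointedPart = q := by
    exact_mod_cast (ext.FPdimSet_eq_ncard_mul_card hq hnp Z).symm.trans
      (S.FPdimSet_ptCentralizer hq ext hnp)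
  obtain ⟨hdeg, hcard⟩ :
      (ext.grading.deg '' Z.carrier).ncard = 1 ∧ Nat.card Z.pointedPart = q := by
    rcases hq.eq_one_or_self_of_dvd _ (Dvd.intro_left _ hq_eq) with h | h
    · omega
    · rw [h] at hq_eq
      exact ⟨Nat.eq_of_mul_eq_mul_right hq.pos (by rw [hq_eq, one_mul]), h⟩
  refine ⟨hcard, fun i hi => ext.trivial_pointed i ?_⟩
  obtain ⟨y, hy⟩ := Set.ncard_eq_one.1 hdeg
  have hi' := Set.mem_image_of_mem ext.grading.deg hi
  have hone := Set.mem_image_of_mem ext.grading.deg Z.one_mem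
  rw [hy, Set.mem_singleton_iff] at hi' hone
  rw [hi', ← hone, ext.grading.deg_one]

lemma stabilizer_eq_pointedPart (hq : q.Prime) (ext : C.ZqExtension q)
    (hnp : ¬ C.Pointed) {X : C.I} (hX : C.dim X ≠ 1) :
    MulAction.stabilizer C.Invertibles X = S.ptCentralizer.pointedPart := by
  have hP := (S.card_pointedPart_ptCentralizer hq ext hnp).1
  have hle := S.ptCentralizer.stabilizer_le_pointedPart S.charGrading.adSet_subset_ker X
  refine Subgroup.eq_of_le_of_card_ge hle ?_
  rcases hq.eq_one_or_self_of_dvd _ (hP ▸ Subgroup.card_dvd_of_le hle) with h | h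
  · exact absurd h (ext.one_lt_card_stabilizer hX).ne'
  · exact (hP.trans h.symm).le

lemma adSet_eq_ptCentralizer (hq : q.Prime) (ext : C.ZqExtension q)
    (hnp : ¬ C.Pointed) : C.adSet = S.ptCentralizer.carrier := by
  obtain ⟨X, hX⟩ := exists_dim_ne_one hnp
  refine S.charGrading.adSet_subset_ker.antisymm fun i hi => gen.base ⟨X, ?_⟩
  set g : C.Invertibles := ⟨i, (S.card_pointedPart_ptCentralizer hq ext hnp).2 hi⟩
  have hg : g ∈ MulAction.stabilizer C.Invertibles X := by
    rw [S.stabilizer_eq_pointedPart hq ext hnp hX]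
    exact hi
  have := N_dual_coe_eq_ite X g
  rw [if_pos hg] at this
  exact this ▸ one_pos

end SMatrix

lemma ZqExtension.dim_sq_eq (ext : C.ZqExtension q) (hq : q.Prime) (hmod : C.Modular)
    (hnp : ¬ C.Pointed) {X : C.I} (hX : C.dim X ≠ 1) : C.dim X ^ 2 = q := by
  obtain ⟨S⟩ := hmod.nonempty_sMatrix
  rw [ext.dim_sq_eq_card_stabilizer, S.stabilizer_eq_pointedPart hq ext hnp hX,
    (S.card_pointedPart_ptCentralizer hq ext hnp).1]

lemma ZqExtension.FPdimSet_adSet (ext : C.ZqExtension q) (hq : q.Prime) (hmod : C.Modular)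
    (hnp : ¬ C.Pointed) : C.FPdimSet C.adSet = q := by
  obtain ⟨S⟩ := hmod.nonempty_sMatrix
  rw [S.adSet_eq_ptCentralizer hq ext hnp, S.FPdimSet_ptCentralizer hq ext hnp]

end FusionData

open FusionData in
/-- In a non-pointed modular `ℤ_q`-extension of a pointed fusion
category, every component of the universal grading (i.e. of any faithful
grading whose trivial component is `C_ad`) has FP dimension `q`, every
non-invertible simple has FP dimension `√q`, and `C` is not integral. -/
theorem modular_extension_universal_grading
    (q : ℕ) (hq : q.Prime) (C : FusionData) (hmod : C.Modular)
    (ext : C.ZqExtension q) (hnp : ¬ C.Pointed) :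
    (∀ (G : Type) [Group G] (g : C.Grading G), g.Faithful →
      {i : C.I | g.deg i = 1} = C.adSet →
      ∀ x : G, C.FPdimSet {i : C.I | g.deg i = x} = (q : ℝ)) ∧
    (∀ X : C.I, C.dim X ≠ 1 → C.dim X = Real.sqrt q) ∧
    ¬ C.Integral := by
  have hdim : ∀ X : C.I, C.dim X ≠ 1 → C.dim X ^ 2 = q := fun _ hX =>
    ext.dim_sq_eq hq hmod hnp hX
  refine ⟨fun G _ g hg hker x => ?_, fun X hX => ?_, fun hint => ?_⟩
  · obtain ⟨i, rfl⟩ := hg x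
    rw [g.FPdimSet_fiber_eq, g.ker_carrier, hker, ext.FPdimSet_adSet hq hmod hnp]
  · rw [← hdim X hX, Real.sqrt_sq (dim_pos X).le]
  · obtain ⟨X, hX⟩ := exists_dim_ne_one hnp
    obtain ⟨m, hm⟩ := hint X
    exact hq.irrational_sqrt.ne_nat m (by rw [← hdim X hX, Real.sqrt_sq (dim_pos X).le, hm])
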